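/- arXiv:2510.02513 — 3 statements merged into one kernel-verified Lean document; each statement's English description precedes it below -/
import Mathlib

section
/- Let X ∈ ℂ^{m×k} have full column rank with k ≤ m, let y ∈ ℂ^m, and let S be a random k-element subset drawn from the volume sampling distribution VS_k(X). Then the estimator β̂ = X(S,:)^{-1} y(S) is unbiased: E[β̂] = X† y, the least-squares solution. -/
/-!
By the Cauchy–Binet formula, `∑_S |det X_S|² = det (XᴴX)`, and for each coordinate `j`,
`∑_S conj (det X_S) · det (X_S with column j replaced by y_S) = det (XᴴX with column j replaced
by Xᴴy)`. By Cramer's rule `|det X_S|² · X_S⁻¹ y_S = conj (det X_S) · cramer X_S y_S` (both sides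
vanish when `X_S` is singular), so the volume-sampling average of `X_S⁻¹ y_S` is
`det (XᴴX)⁻¹ · cramer (XᴴX) (Xᴴy) = (XᴴX)⁻¹ Xᴴy`.
-/

open Matrix Finset

/-- The `k × n` submatrix of `B` consisting of the rows indexed by a `k`-element subset `S`. -/
noncomputable def rowSub {m n k : ℕ} (B : Matrix (Fin m) (Fin n) ℂ)
    (S : Finset (Fin m)) (hS : S.card = k) : Matrix (Fin k) (Fin n) ℂ :=
  B.submatrix (fun i => ((S.orderIsoOfFin hS i : Fin m))) id

/-- The subvector of `y` consisting of the entries indexed by the `k`-element subset `S`. -/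
noncomputable def vecSub {m k : ℕ} (y : Fin m → ℂ)
    (S : Finset (Fin m)) (hS : S.card = k) : Fin k → ℂ :=
  fun i => y (S.orderIsoOfFin hS i : Fin m)

open Equiv

namespace Finset

variable {ι M : Type*} [LinearOrder ι] [AddCommMonoid M] {k : ℕ}

theorem range_orderEmbOfFin_comp_perm (S : Finset ι) (hS : S.card = k) (σ : Perm (Fin k)) :
    Set.range (S.orderEmbOfFin hS ∘ σ) = S := by
  rw [EquivLike.range_comp, range_orderEmbOfFin]

/-- An injective `p : Fin k → ι` factors uniquely as the increasing enumeration of its image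
composed with a permutation of `Fin k`. -/
theorem sum_filter_injective_eq_sum_sum_perm [Fintype ι] (f : (Fin k → ι) → M) :
    ∑ p with Function.Injective p, f p =
      ∑ S : {S : Finset ι // S.card = k}, ∑ σ : Perm (Fin k), f (S.1.orderEmbOfFin S.2 ∘ σ) := by
  rw [← Fintype.sum_prod_type']
  symm
  refine sum_bij (fun x _ => x.1.1.orderEmbOfFin x.1.2 ∘ x.2) (fun x _ => ?_) ?_ ?_
    (fun _ _ => rfl)
  · simpa using (x.1.1.orderEmbOfFin x.1.2).injective.comp x.2.injective
  · rintro ⟨⟨S₁, h₁⟩, σ₁⟩ - ⟨⟨S₂, h₂⟩, σ₂⟩ - h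
    obtain rfl : S₁ = S₂ := by
      simpa [range_orderEmbOfFin_comp_perm] using congrArg Set.range h
    simp only [Prod.mk.injEq, true_and]
    exact Equiv.ext fun i => (S₁.orderEmbOfFin h₁).injective (congrFun h i)
  · intro p hp
    simp only [mem_filter, mem_univ, true_and] at hp
    set S := univ.image p
    have hS : S.card = k := by simp [S, card_image_of_injective _ hp]
    have hrange : Set.range p = Set.range (S.orderEmbOfFin hS) := by simp [S]
    refine ⟨⟨⟨S, hS⟩, (Equiv.ofInjective p hp).trans
      ((Equiv.setCongr hrange).trans (Equiv.ofInjective _ (S.orderEmbOfFin hS).injective).symm)⟩,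
      mem_univ _, funext fun i => ?_⟩
    simp [Equiv.apply_ofInjective_symm]

end Finset

namespace Matrix

section CauchyBinet

variable {R : Type*} [CommRing R] {n ι : Type*} [Fintype n] [DecidableEq n]

theorem det_mul_eq_sum_det_submatrix_mul_prod [Fintype ι] (A : Matrix n ι R) (B : Matrix ι n R) :
    (A * B).det = ∑ p : n → ι, (A.submatrix id p).det * ∏ i, B (p i) i := by
  simp only [det_apply', mul_apply, prod_univ_sum, mul_sum, sum_mul, Fintype.piFinset_univ,
    submatrix_apply, id, prod_mul_distrib, mul_assoc]
  exact sum_comm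

theorem det_submatrix_eq_zero_of_not_injective (A : Matrix n ι R) {p : n → ι}
    (hp : ¬ Function.Injective p) : (A.submatrix id p).det = 0 := by
  obtain ⟨i, j, hpij, hij⟩ : ∃ i j, p i = p j ∧ i ≠ j := by
    simpa [Function.Injective] using hp
  exact det_zero_of_column_eq hij fun r => by simp [hpij]

theorem sum_perm_det_submatrix_comp_mul_prod (A : Matrix n ι R) (B : Matrix ι n R) (e : n → ι) :
    ∑ σ : Perm n, (A.submatrix id (e ∘ σ)).det * ∏ i, B (e (σ i)) i =
      (A.submatrix id e).det * (B.submatrix e id).det := by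
  simp_rw [det_apply' (B.submatrix e id), mul_sum]
  refine sum_congr rfl fun σ _ => ?_
  rw [show A.submatrix id (e ∘ σ) = (A.submatrix id e).submatrix id σ from rfl, det_permute',
    mul_assoc]
  simp [mul_left_comm]

/-- The Cauchy–Binet formula. -/
theorem det_mul_eq_sum_det_submatrix_mul_det_submatrix {k : ℕ} [Fintype ι] [LinearOrder ι]
    (A : Matrix (Fin k) ι R) (B : Matrix ι (Fin k) R) :
    (A * B).det = ∑ S : {S : Finset ι // S.card = k},
      (A.submatrix id (S.1.orderEmbOfFin S.2)).det *
        (B.submatrix (S.1.orderEmbOfFin S.2) id).det := by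
  have hvanish (p : Fin k → ι) (hp : ¬ Function.Injective p) :
      (A.submatrix id p).det * ∏ i, B (p i) i = 0 := by
    rw [det_submatrix_eq_zero_of_not_injective A hp, zero_mul]
  rw [det_mul_eq_sum_det_submatrix_mul_prod,
    ← sum_filter_of_ne fun p _ h => not_imp_comm.1 (hvanish p) h,
    sum_filter_injective_eq_sum_sum_perm]
  exact sum_congr rfl fun S _ => sum_perm_det_submatrix_comp_mul_prod A B _

end CauchyBinet

variable {ι : Type*} [Fintype ι] [LinearOrder ι] {k : ℕ}

theorem det_conjTranspose_mul_eq_sum {R : Type*} [CommRing R] [StarRing R]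
    (A B : Matrix ι (Fin k) R) :
    (Aᴴ * B).det = ∑ S : {S : Finset ι // S.card = k},
      star (A.submatrix (S.1.orderEmbOfFin S.2) id).det *
        (B.submatrix (S.1.orderEmbOfFin S.2) id).det := by
  simp_rw [det_mul_eq_sum_det_submatrix_mul_det_submatrix, ← conjTranspose_submatrix,
    det_conjTranspose]

variable {𝕜 : Type*} [RCLike 𝕜]

theorem det_conjTranspose_mul_self_eq_sum (A : Matrix ι (Fin k) 𝕜) :
    (Aᴴ * A).det = ∑ S : {S : Finset ι // S.card = k},
      ((‖(A.submatrix (S.1.orderEmbOfFin S.2) id).det‖ ^ 2 : ℝ) : 𝕜) := by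
  simp_rw [det_conjTranspose_mul_eq_sum, RCLike.star_def, RCLike.conj_mul, RCLike.ofReal_pow]

theorem cramer_conjTranspose_mul_self (A : Matrix ι (Fin k) 𝕜) (y : ι → 𝕜) :
    cramer (Aᴴ * A) (Aᴴ *ᵥ y) = ∑ S : {S : Finset ι // S.card = k},
      star (A.submatrix (S.1.orderEmbOfFin S.2) id).det •
        cramer (A.submatrix (S.1.orderEmbOfFin S.2) id) (y ∘ S.1.orderEmbOfFin S.2) := by
  ext j
  simp_rw [cramer_apply, ← mul_updateCol, det_conjTranspose_mul_eq_sum, Finset.sum_apply,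
    Pi.smul_apply, cramer_apply, smul_eq_mul]
  -- `(A.updateCol j y).submatrix e id` and `(A.submatrix e id).updateCol j (y ∘ e)` agree
  -- definitionally.
  rfl

theorem inv_mulVec_eq_inv_det_smul_cramer {K n : Type*} [Field K] [Fintype n] [DecidableEq n]
    (M : Matrix n n K) (b : n → K) : M⁻¹ *ᵥ b = M.det⁻¹ • cramer M b := by
  rw [inv_def, Ring.inverse_eq_inv', smul_mulVec, cramer_eq_adjugate_mulVec]

theorem norm_sq_det_smul_inv_mulVec {n : Type*} [Fintype n] [DecidableEq n]
    (M : Matrix n n 𝕜) (b : n → 𝕜) :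
    ‖M.det‖ ^ 2 • (M⁻¹ *ᵥ b) = star M.det • cramer M b := by
  rw [RCLike.real_smul_eq_coe_smul (K := 𝕜), inv_mulVec_eq_inv_det_smul_cramer, smul_smul,
    RCLike.ofReal_pow, ← RCLike.conj_mul]
  rcases eq_or_ne M.det 0 with h | h
  · simp [h]
  · rw [mul_inv_cancel_right₀ h, RCLike.star_def]

end Matrix

theorem rowSub_eq_submatrix {m n k : ℕ} (B : Matrix (Fin m) (Fin n) ℂ) (S : Finset (Fin m))
    (hS : S.card = k) : rowSub B S hS = B.submatrix (S.orderEmbOfFin hS) id :=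
  rfl

theorem vecSub_eq_comp {m k : ℕ} (y : Fin m → ℂ) (S : Finset (Fin m)) (hS : S.card = k) :
    vecSub y S hS = y ∘ S.orderEmbOfFin hS :=
  rfl

theorem volume_sampling_unbiased_general (m k : ℕ)
    (X : Matrix (Fin m) (Fin k) ℂ) (y : Fin m → ℂ) :
    (∑ S : {S : Finset (Fin m) // S.card = k},
        (‖(rowSub X S.1 S.2).det‖ ^ 2 /
          (∑ R : {R : Finset (Fin m) // R.card = k},
            ‖(rowSub X R.1 R.2).det‖ ^ 2)) •
          ((rowSub X S.1 S.2)⁻¹ *ᵥ vecSub y S.1 S.2)) =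
      (Xᴴ * X)⁻¹ *ᵥ (Xᴴ *ᵥ y) := by
  simp only [rowSub_eq_submatrix, vecSub_eq_comp]
  set D := ∑ R : {R : Finset (Fin m) // R.card = k},
    ‖(X.submatrix (R.1.orderEmbOfFin R.2) id).det‖ ^ 2
  have hD : (D : ℂ) = (Xᴴ * X).det :=
    (RCLike.ofReal_sum _ _).trans (det_conjTranspose_mul_self_eq_sum X).symm
  simp_rw [div_eq_inv_mul, mul_smul, ← smul_sum, norm_sq_det_smul_inv_mulVec]
  rw [← cramer_conjTranspose_mul_self, inv_mulVec_eq_inv_det_smul_cramer, ← hD,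
    ← Complex.ofReal_inv]
  exact RCLike.real_smul_eq_coe_smul _ _

/-- Unbiasedness of volume-sampling active regression: if `S ~ VS_k(X)` (probability of `S`
proportional to `|det X(S,:)|²`), then the estimator `β̂ = X(S,:)⁻¹ y(S)` satisfies
`E[β̂] = X† y = (X*X)⁻¹X* y`, the least-squares solution (`X` has full column rank). -/
theorem volume_sampling_unbiased (m k : ℕ) (hk : k ≤ m)
    (X : Matrix (Fin m) (Fin k) ℂ) (hX : X.rank = k) (y : Fin m → ℂ) :
    (∑ S : {S : Finset (Fin m) // S.card = k},
        (‖(rowSub X S.1 S.2).det‖ ^ 2 /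
          (∑ R : {R : Finset (Fin m) // R.card = k},
            ‖(rowSub X R.1 R.2).det‖ ^ 2)) •
          ((rowSub X S.1 S.2)⁻¹ *ᵥ vecSub y S.1 S.2)) =
      (Xᴴ * X)⁻¹ *ᵥ (Xᴴ *ᵥ y) :=
  volume_sampling_unbiased_general m k X y
end

section
/- There exist a full-rank matrix X ∈ ℝ^{(k+1)×k} and a vector y ∈ ℝ^{k+1} such that for every k-element subset S of {1,...,k+1}, the submatrix X(S,:) is invertible and ‖X·X(S,:)^{-1}·y(S) − y‖² = (k+1)·‖(I − XX†)y‖². In particular the factor (k+1) in the volume-sampling active regression guarantee cannot be improved. -/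
open Matrix Finset

/-- The `k × n` submatrix of the rows of a real matrix indexed by a `k`-element subset `S`. -/
noncomputable def rowSubR {m n k : ℕ} (B : Matrix (Fin m) (Fin n) ℝ)
    (S : Finset (Fin m)) (hS : S.card = k) : Matrix (Fin k) (Fin n) ℝ :=
  B.submatrix (fun i => ((S.orderIsoOfFin hS i : Fin m))) id

/-- The subvector of `y` consisting of the entries indexed by the `k`-element subset `S`. -/
noncomputable def vecSubR {m k : ℕ} (y : Fin m → ℝ)
    (S : Finset (Fin m)) (hS : S.card = k) : Fin k → ℝ :=
  fun i => y (S.orderIsoOfFin hS i : Fin m)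

/-- The squared Euclidean norm of a real vector. -/
noncomputable def vecNormSqR {m : ℕ} (v : Fin m → ℝ) : ℝ :=
  ∑ i, (v i) ^ 2

/-!
Take `y = 1` and for `X` any injective matrix whose columns sum to zero, e.g. the one with
columns `e_j - e_last`. Since `Xᵀ y = 0`, the least-squares residual is `y` itself, of squared
norm `k + 1`. For a `k`-subset `S` missing the index `m`, `X(S,:)` is invertible: if `X(S,:) v = 0`
then `X v` vanishes off `m` and sums to zero, so `X v = 0`. The interpolation residual
`r = X X(S,:)⁻¹ y(S) - y` vanishes off `m` and sums to `0 - (k + 1)`, so `‖r‖² = (k + 1)²`.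
-/

lemma exists_forall_ne_mem_of_card_eq {k : ℕ} {S : Finset (Fin (k + 1))} (hS : S.card = k) :
    ∃ m, ∀ i ≠ m, i ∈ S := by
  obtain ⟨m, hm⟩ := card_eq_one.mp (by simp [card_compl, hS] : Sᶜ.card = 1)
  refine ⟨m, fun i hi => ?_⟩
  by_contra hiS
  exact hi (mem_singleton.mp (hm ▸ mem_compl.mpr hiS))

lemma vecNormSqR_eq_sq_of_forall_ne {n : ℕ} {r : Fin n → ℝ} {m : Fin n}
    (hr : ∀ i ≠ m, r i = 0) : vecNormSqR r = r m ^ 2 :=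
  sum_eq_single m (fun i _ hi => by simp [hr i hi]) (by simp)

lemma vecNormSqR_one (n : ℕ) : vecNormSqR (1 : Fin n → ℝ) = n := by
  simp [vecNormSqR]

lemma sum_mulVec_eq_zero {R ι κ : Type*} [Semiring R] [Fintype ι] [Fintype κ]
    {X : Matrix ι κ R} (hX : (1 : ι → R) ᵥ* X = 0) (v : κ → R) : ∑ i, (X *ᵥ v) i = 0 := by
  rw [← one_dotProduct, dotProduct_mulVec, hX, zero_dotProduct]

lemma mulVec_eq_self_of_transpose_mulVec_eq_zero {R ι κ : Type*} [CommRing R] [Fintype ι]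
    [DecidableEq ι] [Fintype κ] [DecidableEq κ] {X : Matrix ι κ R} {y : ι → R}
    (hy : Xᵀ *ᵥ y = 0) :
    (1 - X * (Xᵀ * X)⁻¹ * Xᵀ) *ᵥ y = y := by
  rw [sub_mulVec, one_mulVec, ← mulVec_mulVec, hy, mulVec_zero, sub_zero]

section RowSubmatrix

variable {m n k : ℕ} (B : Matrix (Fin m) (Fin n) ℝ) {S : Finset (Fin m)} (hS : S.card = k)

lemma mulVec_apply_of_mem (v : Fin n → ℝ) {x : Fin m} (hx : x ∈ S) :
    (B *ᵥ v) x = (rowSubR B S hS *ᵥ v) ((S.orderIsoOfFin hS).symm ⟨x, hx⟩) := by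
  have hx' : x = S.orderIsoOfFin hS ((S.orderIsoOfFin hS).symm ⟨x, hx⟩) := by simp
  conv_lhs => rw [hx']
  rfl

lemma vecSubR_orderIsoOfFin_symm (y : Fin m → ℝ) {x : Fin m} (hx : x ∈ S) :
    vecSubR y S hS ((S.orderIsoOfFin hS).symm ⟨x, hx⟩) = y x := by
  simp [vecSubR]

lemma mulVec_rowSubR_inv_apply_of_mem {B} (hB : IsUnit (rowSubR B S hS).det) (y : Fin m → ℝ)
    {x : Fin m} (hx : x ∈ S) :
    (B *ᵥ ((rowSubR B S hS)⁻¹ *ᵥ vecSubR y S hS)) x = y x := by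
  rw [mulVec_apply_of_mem B hS _ hx, mulVec_mulVec, mul_nonsing_inv _ hB, one_mulVec,
    vecSubR_orderIsoOfFin_symm]

end RowSubmatrix

lemma isUnit_det_rowSubR {k : ℕ} {X : Matrix (Fin (k + 1)) (Fin k) ℝ}
    (hinj : Function.Injective X.mulVec) (hcol : (1 : Fin (k + 1) → ℝ) ᵥ* X = 0)
    {S : Finset (Fin (k + 1))} (hS : S.card = k) : IsUnit (rowSubR X S hS).det := by
  rw [← isUnit_iff_isUnit_det, ← mulVec_injective_iff_isUnit, ← coe_mulVecLin,
    injective_iff_map_eq_zero]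
  intro v hv
  obtain ⟨m, hm⟩ := exists_forall_ne_mem_of_card_eq hS
  have hoff : ∀ i ≠ m, (X *ᵥ v) i = 0 := fun i hi => by
    rw [mulVec_apply_of_mem X hS v (hm i hi)]
    exact congrFun hv _
  have hat : (X *ᵥ v) m = 0 := by
    rw [← sum_mulVec_eq_zero hcol v, sum_eq_single m (fun i _ hi => hoff i hi) (by simp)]
  apply hinj
  rw [mulVec_zero]
  funext i
  by_cases hi : i = m
  exacts [hi ▸ hat, hoff i hi]

lemma rank_eq_of_mulVec_injective {K : Type*} [Field K] {m n : ℕ} {X : Matrix (Fin m) (Fin n) K}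
    (hinj : Function.Injective X.mulVec) : X.rank = n := by
  rw [rank, LinearMap.finrank_range_of_inj hinj, Module.finrank_fin_fun]

def diffLastMatrix (k : ℕ) : Matrix (Fin (k + 1)) (Fin k) ℝ :=
  of fun i j => (if i = j.castSucc then 1 else 0) - (if i = Fin.last k then 1 else 0)

lemma diffLastMatrix_mulVec_castSucc (k : ℕ) (v : Fin k → ℝ) (j : Fin k) :
    (diffLastMatrix k *ᵥ v) j.castSucc = v j := by
  simp [diffLastMatrix, mulVec, dotProduct, Fin.castSucc_ne_last]

lemma mulVec_injective_diffLastMatrix (k : ℕ) : Function.Injective (diffLastMatrix k).mulVec :=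
  fun v w h => funext fun j => by
    rw [← diffLastMatrix_mulVec_castSucc k v, ← diffLastMatrix_mulVec_castSucc k w, h]

lemma one_vecMul_diffLastMatrix (k : ℕ) : (1 : Fin (k + 1) → ℝ) ᵥ* diffLastMatrix k = 0 := by
  funext j
  simp [diffLastMatrix, vecMul, dotProduct, sum_sub_distrib]

/-- Optimality of the factor `k+1`: there exist a full-rank `X ∈ ℝ^{(k+1)×k}` and
`y ∈ ℝ^{k+1}` such that for every `k`-subset `S`, `X(S,:)` is invertible and the
active-regression residual equals `(k+1)` times the minimal one (with `X† = (XᵀX)⁻¹Xᵀ`). -/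
theorem volume_sampling_factor_optimal (k : ℕ) :
    ∃ (X : Matrix (Fin (k + 1)) (Fin k) ℝ) (y : Fin (k + 1) → ℝ),
      X.rank = k ∧
      ∀ (S : Finset (Fin (k + 1))) (hS : S.card = k),
        IsUnit (rowSubR X S hS).det ∧
        vecNormSqR (X *ᵥ ((rowSubR X S hS)⁻¹ *ᵥ vecSubR y S hS) - y) =
          (k + 1) * vecNormSqR ((1 - X * (Xᵀ * X)⁻¹ * Xᵀ) *ᵥ y) := by
  set X := diffLastMatrix k
  have hinj : Function.Injective X.mulVec := mulVec_injective_diffLastMatrix k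
  have hcol : (1 : Fin (k + 1) → ℝ) ᵥ* X = 0 := one_vecMul_diffLastMatrix k
  refine ⟨X, 1, rank_eq_of_mulVec_injective hinj, fun S hS => ?_⟩
  have hunit := isUnit_det_rowSubR hinj hcol hS
  refine ⟨hunit, ?_⟩
  obtain ⟨m, hm⟩ := exists_forall_ne_mem_of_card_eq hS
  set r := X *ᵥ ((rowSubR X S hS)⁻¹ *ᵥ vecSubR 1 S hS) - 1
  have hoff : ∀ i ≠ m, r i = 0 := fun i hi =>
    sub_eq_zero.mpr (mulVec_rowSubR_inv_apply_of_mem hS hunit 1 (hm i hi))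
  have hsum : ∑ i, r i = -(k + 1) := by
    simp only [r, Pi.sub_apply]
    rw [sum_sub_distrib, sum_mulVec_eq_zero hcol]
    simp
  have hat : r m = -(k + 1) := by
    rw [← hsum, sum_eq_single m (fun i _ hi => hoff i hi) (by simp)]
  have hproj : (1 - X * (Xᵀ * X)⁻¹ * Xᵀ) *ᵥ (1 : Fin (k + 1) → ℝ) = 1 :=
    mulVec_eq_self_of_transpose_mulVec_eq_zero (by rw [mulVec_transpose, hcol])
  rw [vecNormSqR_eq_sq_of_forall_ne hoff, hat, hproj, vecNormSqR_one]
  push_cast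
  ring
end

section
/- In the RejectionRPQR setting with Q ∈ ℂ^{m×k} orthonormal and i columns already selected spanning projector Π, the probability of acceptance in a single rejection-sampling round (proposal t drawn with P{t=j} = ℓ_j/k, accepted with probability ‖(I−Π)Q*(:,t)‖²/ℓ_t) equals (k−i)/k. -/
open Matrix Finset

/-!
The acceptance probability is `∑ⱼ (ℓⱼ/k)·(‖(I−Π)Q*(:,j)‖²/ℓⱼ) = (1/k)·∑ⱼ ‖(I−Π)Q*(:,j)‖²`, the
leverage scores cancelling (a zero leverage score means a zero column of `Q*`). The remaining sum
is the squared Frobenius norm of `(I−Π)Q*`, i.e. `tr((I−Π)Q*Q(I−Π)) = tr(I−Π) = k − tr Π`, and the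
trace of a projection is the dimension of its range, here `i`.
-/

namespace Matrix

theorem trace_eq_finrank_of_isProj {K n : Type*} [Field K] [Fintype n] [DecidableEq n]
    {W : Submodule K (n → K)} {P : Matrix n n K} (hP : LinearMap.IsProj W P.toLin') :
    P.trace = Module.finrank K W :=
  (trace_toLin'_eq P).symm.trans hP.trace

theorem isProj_span_toLin' {K n : Type*} [Field K] [Fintype n] [DecidableEq n]
    {T : Set (n → K)} {P : Matrix n n K} (hfix : ∀ w ∈ T, P *ᵥ w = w)
    (hrange : ∀ v, P *ᵥ v ∈ Submodule.span K T) :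
    LinearMap.IsProj (Submodule.span K T) P.toLin' :=
  ⟨hrange, fun _ hx =>
    (Submodule.span_le (p := LinearMap.eqLocus P.toLin' LinearMap.id)).mpr hfix hx⟩

variable {𝕜 m n : Type*} [RCLike 𝕜] [Fintype m] [Fintype n]

theorem trace_mul_conjTranspose_self_eq_sum_norm_sq (A : Matrix m n 𝕜) :
    (A * Aᴴ).trace = ((∑ i, ∑ j, ‖A i j‖ ^ 2 : ℝ) : 𝕜) := by
  push_cast
  refine Finset.sum_congr rfl fun i _ => Finset.sum_congr rfl fun j _ => ?_
  exact RCLike.mul_conj (A i j)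

theorem sum_norm_sq_mulVec_conjTranspose_col_eq_trace [DecidableEq n] {R : Matrix n n 𝕜}
    (hR : R.IsHermitian) (hRR : IsIdempotentElem R) {Q : Matrix m n 𝕜} (hQ : Qᴴ * Q = 1) :
    ((∑ j, ∑ a, ‖(R *ᵥ fun b => Qᴴ b j) a‖ ^ 2 : ℝ) : 𝕜) = R.trace := by
  have hfrob : (R * Qᴴ) * (R * Qᴴ)ᴴ = R := by
    rw [conjTranspose_mul, conjTranspose_conjTranspose, Matrix.mul_assoc,
      ← Matrix.mul_assoc Qᴴ, hQ, Matrix.one_mul, hR.eq, hRR.eq]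
  conv_rhs => rw [← hfrob]
  rw [trace_mul_conjTranspose_self_eq_sum_norm_sq, Finset.sum_comm]
  rfl

end Matrix

theorem rejection_round_acceptance_general (m k i : ℕ)
    (Q : Matrix (Fin m) (Fin k) ℂ) (hQ : Qᴴ * Q = 1)
    (S : Finset (Fin m)) (hS : S.card = i)
    (P : Matrix (Fin k) (Fin k) ℂ)
    (hProj : P * P = P) (hHerm : Pᴴ = P)
    (hfix : ∀ j ∈ S, P *ᵥ (fun a => Qᴴ a j) = (fun a => Qᴴ a j))
    (hrange : ∀ v : Fin k → ℂ,
      P *ᵥ v ∈ Submodule.span ℂ {w : Fin k → ℂ | ∃ j ∈ S, w = fun a => Qᴴ a j})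
    (hindep : LinearIndependent ℂ (fun j : S => (fun a => Qᴴ a (j : Fin m)) : S → Fin k → ℂ)) :
    (∑ j : Fin m,
        ((∑ a, ‖Q j a‖ ^ 2) / k) *
          ((∑ a, ‖((1 - P) *ᵥ (fun a => Qᴴ a j)) a‖ ^ 2) /
            (∑ a, ‖Q j a‖ ^ 2))) =
      ((k : ℝ) - i) / k := by
  have hcols : {w : Fin k → ℂ | ∃ j ∈ S, w = fun a => Qᴴ a j} =
      Set.range (fun j : S => (fun a => Qᴴ a (j : Fin m))) := by
    ext w; simp [eq_comm]
  have htrace : P.trace = i := by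
    rw [trace_eq_finrank_of_isProj (isProj_span_toLin' (by rintro _ ⟨j, hj, rfl⟩; exact hfix j hj)
      hrange), hcols, finrank_span_eq_card hindep, Fintype.card_coe, hS]
  have hsum : ∑ j, ∑ a, ‖((1 - P) *ᵥ (fun a => Qᴴ a j)) a‖ ^ 2 = (k : ℝ) - i := by
    have hfrob : ((∑ j, ∑ a, ‖((1 - P) *ᵥ (fun a => Qᴴ a j)) a‖ ^ 2 : ℝ) : ℂ) = (1 - P).trace :=
      sum_norm_sq_mulVec_conjTranspose_col_eq_trace (isHermitian_one.sub hHerm)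
        (IsIdempotentElem.one_sub hProj) hQ
    rw [trace_sub, trace_one, htrace, Fintype.card_fin] at hfrob
    exact_mod_cast hfrob
  have hzero (j : Fin m) (hj : ∑ a, ‖Q j a‖ ^ 2 = 0) :
      ∑ a, ‖((1 - P) *ᵥ (fun a => Qᴴ a j)) a‖ ^ 2 = 0 := by
    have hQj := (Fintype.sum_eq_zero_iff_of_nonneg fun a => sq_nonneg ‖Q j a‖).mp hj
    have hcol : (fun a => Qᴴ a j) = 0 := funext fun a => by simpa using congrFun hQj a
    rw [hcol, mulVec_zero]
    simp
  simp_rw [div_mul_eq_mul_div]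
  rw [Finset.sum_congr rfl fun j _ => by rw [mul_div_cancel_of_imp' (hzero j)], ← sum_div, hsum]

/-- Single-round acceptance probability in RejectionRPQR: with `Q ∈ ℂ^{m×k}` orthonormal,
`Π` the orthogonal projector onto the span of `i < k` linearly independent selected columns
of `Q*`, leverage scores `ℓ_j = ‖Q(j,:)‖²`, proposal `t` drawn with `P{t=j} = ℓ_j/k` and
accepted with probability `‖(I−Π)Q*(:,t)‖²/ℓ_t`, the probability of acceptance equals
`(k−i)/k`. -/
theorem rejection_round_acceptance (m k i : ℕ) (hik : i < k)
    (Q : Matrix (Fin m) (Fin k) ℂ) (hQ : Qᴴ * Q = 1)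
    (S : Finset (Fin m)) (hS : S.card = i)
    (P : Matrix (Fin k) (Fin k) ℂ)
    (hProj : P * P = P) (hHerm : Pᴴ = P)
    (hfix : ∀ j ∈ S, P *ᵥ (fun a => Qᴴ a j) = (fun a => Qᴴ a j))
    (hrange : ∀ v : Fin k → ℂ,
      P *ᵥ v ∈ Submodule.span ℂ {w : Fin k → ℂ | ∃ j ∈ S, w = fun a => Qᴴ a j})
    (hindep : LinearIndependent ℂ (fun j : S => (fun a => Qᴴ a (j : Fin m)) : S → Fin k → ℂ)) :
    (∑ j : Fin m,
        ((∑ a, ‖Q j a‖ ^ 2) / k) *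
          ((∑ a, ‖((1 - P) *ᵥ (fun a => Qᴴ a j)) a‖ ^ 2) /
            (∑ a, ‖Q j a‖ ^ 2))) =
      ((k : ℝ) - i) / k :=
  rejection_round_acceptance_general m k i Q hQ S hS P hProj hHerm hfix hrange hindep
end
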